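/- arXiv:2503.03482 — 4 statements merged into one kernel-verified Lean document; each statement's English description precedes it below -/
import Mathlib

section
/- For every integer n ≥ 3 and all real λ > 0 and z > 0, the improper integral ∫₀^{z^{n/(n−1)}} (1/(n√λ))·(z^{2/(n−1)} − x^{2/n})^{−1/2} dx converges and equals (z/(2√λ))·√π·Γ(n/2)/Γ((n+1)/2). -/
open Set Real MeasureTheory intervalIntegral

/-!
The substitution `x = C sin^n θ` with `C = z^{n/(n-1)}` maps `(0, π/2)` monotonically onto
`(0, C)`, and turns `C^{2/n} - x^{2/n}` into `(C^{1/n} cos θ)^2`. The Jacobian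
`n C sin^{n-1} θ cos θ` cancels the resulting factor `1/cos θ`, so the integral becomes
`n z ∫₀^{π/2} sin^{n-1} θ dθ`, a Wallis integral, which equals `√π Γ(n/2) / (2 Γ((n+1)/2))` by
the reduction formula and `Γ(s+1) = s Γ(s)`.
-/

theorem integral_sin_pow_zero_pi_div_two (m : ℕ) :
    ∫ θ in (0 : ℝ)..(π / 2), sin θ ^ m =
      √π / 2 * Gamma ((m + 1) / 2) / Gamma (m / 2 + 1) := by
  induction m using Nat.twoStepInduction with
  | zero =>
    norm_num [Gamma_one_half_eq]
    field_simp
    exact (sq_sqrt pi_pos.le).symm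
  | one =>
    rw [show ((1 : ℕ) : ℝ) / 2 + 1 = 1 / 2 + 1 by norm_num, Gamma_add_one one_half_pos.ne']
    norm_num [Gamma_one_half_eq]
    field_simp
  | more m ih _ =>
    have hΓ₁ := Gamma_add_one (show ((m : ℝ) + 1) / 2 ≠ 0 by positivity)
    have hΓ₂ := Gamma_add_one (show (m : ℝ) / 2 + 1 ≠ 0 by positivity)
    have : Gamma ((m : ℝ) / 2 + 1) ≠ 0 := (Gamma_pos_of_pos (by positivity)).ne'
    rw [integral_sin_pow, ih]
    push_cast
    rw [show ((m : ℝ) + 2 + 1) / 2 = ((m : ℝ) + 1) / 2 + 1 by ring,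
      show ((m : ℝ) + 2) / 2 + 1 = (m : ℝ) / 2 + 1 + 1 by ring, hΓ₁, hΓ₂]
    simp only [sin_zero, cos_zero, sin_pi_div_two, cos_pi_div_two, zero_pow (Nat.succ_ne_zero _),
      one_pow, mul_zero, mul_one, sub_self, zero_div, zero_add]
    field_simp

theorem sq_rpow_neg_one_half {a : ℝ} (ha : 0 ≤ a) : (a ^ 2) ^ (-(1 : ℝ) / 2) = a⁻¹ := by
  rw [neg_div, rpow_neg (sq_nonneg a), ← sqrt_eq_rpow, sqrt_sq ha]

theorem pow_rpow_two_div {a : ℝ} (ha : 0 ≤ a) {n : ℕ} (hn : n ≠ 0) :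
    (a ^ n) ^ ((2 : ℝ) / n) = a ^ 2 := by
  rw [← rpow_natCast, ← rpow_mul ha, mul_div_cancel₀ _ (Nat.cast_ne_zero.2 hn), rpow_two]

section SinPowSubstitution

variable {E : Type*} [NormedAddCommGroup E] [NormedSpace ℝ E] {C : ℝ} {n : ℕ}

theorem strictMonoOn_sin_pow (hn : n ≠ 0) :
    StrictMonoOn (fun θ ↦ sin θ ^ n) (Icc 0 (π / 2)) :=
  (pow_left_strictMonoOn₀ hn).comp
    (strictMonoOn_sin.mono (Icc_subset_Icc (by linarith [pi_pos]) le_rfl))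
    fun _ hθ ↦ sin_nonneg_of_nonneg_of_le_pi hθ.1 (by linarith [hθ.2, pi_pos])

theorem strictMonoOn_const_mul_sin_pow (hC : 0 < C) (hn : n ≠ 0) :
    StrictMonoOn (fun θ ↦ C * sin θ ^ n) (Icc 0 (π / 2)) :=
  (strictMono_mul_left_of_pos hC).comp_strictMonoOn (strictMonoOn_sin_pow hn)

theorem image_const_mul_sin_pow_Ioo (hC : 0 < C) (hn : n ≠ 0) :
    (fun θ ↦ C * sin θ ^ n) '' Ioo 0 (π / 2) = Ioo 0 C := by
  simpa [zero_pow hn] using (by fun_prop : Continuous fun θ ↦ C * sin θ ^ n).continuousOn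
    |>.image_Ioo_of_strictMonoOn (by positivity) (strictMonoOn_const_mul_sin_pow hC hn)

theorem hasDerivAt_const_mul_sin_pow (θ : ℝ) :
    HasDerivAt (fun θ ↦ C * sin θ ^ n) (C * n * sin θ ^ (n - 1) * cos θ) θ := by
  simpa [mul_assoc] using ((hasDerivAt_sin θ).pow n).const_mul C

theorem const_mul_sin_pow_deriv_pos (hC : 0 < C) (hn : n ≠ 0) {θ : ℝ} (hθ : θ ∈ Ioo 0 (π / 2)) :
    0 < C * n * sin θ ^ (n - 1) * cos θ := by
  have hsin : 0 < sin θ := sin_pos_of_pos_of_lt_pi hθ.1 (by linarith [hθ.2, pi_pos])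
  have hcos : 0 < cos θ := cos_pos_of_mem_Ioo ⟨by linarith [hθ.1, pi_pos], hθ.2⟩
  have : (0 : ℝ) < n := by positivity
  positivity

theorem eqOn_abs_deriv_smul_const_mul_sin_pow (hC : 0 < C) (hn : n ≠ 0) (g : ℝ → E) :
    EqOn (fun θ ↦ |C * n * sin θ ^ (n - 1) * cos θ| • g (C * sin θ ^ n))
      (fun θ ↦ (C * n * sin θ ^ (n - 1) * cos θ) • g (C * sin θ ^ n)) (Ioo 0 (π / 2)) :=
  fun _ hθ ↦ by dsimp only; rw [abs_of_pos (const_mul_sin_pow_deriv_pos hC hn hθ)]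

theorem integrableOn_Ioo_iff_sin_pow_subst (hC : 0 < C) (hn : n ≠ 0) (g : ℝ → E) :
    IntegrableOn g (Ioo 0 C) ↔
      IntegrableOn (fun θ ↦ (C * n * sin θ ^ (n - 1) * cos θ) • g (C * sin θ ^ n))
        (Ioo 0 (π / 2)) := by
  rw [← image_const_mul_sin_pow_Ioo hC hn, integrableOn_image_iff_integrableOn_abs_deriv_smul
    measurableSet_Ioo (fun θ _ ↦ (hasDerivAt_const_mul_sin_pow θ).hasDerivWithinAt)
    ((strictMonoOn_const_mul_sin_pow hC hn).mono Ioo_subset_Icc_self).injOn]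
  exact integrableOn_congr_fun (eqOn_abs_deriv_smul_const_mul_sin_pow hC hn g) measurableSet_Ioo

theorem setIntegral_Ioo_eq_sin_pow_subst (hC : 0 < C) (hn : n ≠ 0) (g : ℝ → E) :
    ∫ x in Ioo 0 C, g x =
      ∫ θ in Ioo 0 (π / 2), (C * n * sin θ ^ (n - 1) * cos θ) • g (C * sin θ ^ n) := by
  rw [← image_const_mul_sin_pow_Ioo hC hn, integral_image_eq_integral_abs_deriv_smul
    measurableSet_Ioo (fun θ _ ↦ (hasDerivAt_const_mul_sin_pow θ).hasDerivWithinAt)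
    ((strictMonoOn_const_mul_sin_pow hC hn).mono Ioo_subset_Icc_self).injOn]
  exact setIntegral_congr_fun measurableSet_Ioo
    (eqOn_abs_deriv_smul_const_mul_sin_pow hC hn g)

theorem eqOn_sin_pow_subst_rpow_sub_rpow (hC : 0 < C) (hn : n ≠ 0) :
    EqOn (fun θ ↦ (C * n * sin θ ^ (n - 1) * cos θ) •
        (C ^ ((2 : ℝ) / n) - (C * sin θ ^ n) ^ ((2 : ℝ) / n)) ^ (-(1 : ℝ) / 2))
      (fun θ ↦ n * C ^ (((n : ℝ) - 1) / n) * sin θ ^ (n - 1)) (Ioo 0 (π / 2)) := by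
  intro θ hθ
  dsimp only
  rw [smul_eq_mul]
  have hsin : 0 < sin θ := sin_pos_of_pos_of_lt_pi hθ.1 (by linarith [hθ.2, pi_pos])
  have hcos : 0 < cos θ := cos_pos_of_mem_Ioo ⟨by linarith [hθ.1, pi_pos], hθ.2⟩
  set c := C ^ ((1 : ℝ) / n)
  have hc : 0 < c := by positivity
  have hC2 : C ^ ((2 : ℝ) / n) = c ^ 2 := by rw [← rpow_mul_natCast hC.le]; ring_nf
  have hCc : C ^ (((n : ℝ) - 1) / n) = C / c := by
    rw [show ((n : ℝ) - 1) / n = 1 - 1 / n by field_simp, rpow_sub hC, rpow_one]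
  have hrad : C ^ ((2 : ℝ) / n) - (C * sin θ ^ n) ^ ((2 : ℝ) / n) = (c * cos θ) ^ 2 := by
    rw [mul_rpow hC.le (by positivity), pow_rpow_two_div hsin.le hn, hC2, mul_pow, cos_sq']
    ring
  rw [hrad, sq_rpow_neg_one_half (by positivity), hCc]
  field_simp

theorem intervalIntegrable_rpow_sub_rpow (hC : 0 < C) (hn : n ≠ 0) :
    IntervalIntegrable (fun x : ℝ ↦ (C ^ ((2 : ℝ) / n) - x ^ ((2 : ℝ) / n)) ^ (-(1 : ℝ) / 2))
      volume 0 C := by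
  rw [intervalIntegrable_iff_integrableOn_Ioo_of_le hC.le,
    integrableOn_Ioo_iff_sin_pow_subst hC hn,
    integrableOn_congr_fun (eqOn_sin_pow_subst_rpow_sub_rpow hC hn) measurableSet_Ioo]
  exact (Continuous.integrableOn_Icc (by fun_prop)).mono_set Ioo_subset_Icc_self

theorem integral_rpow_sub_rpow (hC : 0 < C) (hn : n ≠ 0) :
    ∫ x in (0 : ℝ)..C, (C ^ ((2 : ℝ) / n) - x ^ ((2 : ℝ) / n)) ^ (-(1 : ℝ) / 2) =
      n * C ^ (((n : ℝ) - 1) / n) * ∫ θ in (0 : ℝ)..(π / 2), sin θ ^ (n - 1) := by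
  rw [integral_of_le hC.le, integral_Ioc_eq_integral_Ioo,
    setIntegral_Ioo_eq_sin_pow_subst hC hn,
    setIntegral_congr_fun measurableSet_Ioo (eqOn_sin_pow_subst_rpow_sub_rpow hC hn),
    MeasureTheory.integral_const_mul, integral_of_le (by positivity), integral_Ioc_eq_integral_Ioo]

end SinPowSubstitution

theorem beta_integral_general (n : ℕ) (hn : 3 ≤ n) (lam z : ℝ) (hz : 0 < z) :
    IntervalIntegrable
      (fun x : ℝ => (1 / (n * Real.sqrt lam)) *
        (z ^ ((2 : ℝ) / ((n : ℝ) - 1)) - x ^ ((2 : ℝ) / n)) ^ (-(1 : ℝ) / 2))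
      volume 0 (z ^ ((n : ℝ) / ((n : ℝ) - 1))) ∧
    ∫ x in (0 : ℝ)..(z ^ ((n : ℝ) / ((n : ℝ) - 1))),
        (1 / (n * Real.sqrt lam)) *
          (z ^ ((2 : ℝ) / ((n : ℝ) - 1)) - x ^ ((2 : ℝ) / n)) ^ (-(1 : ℝ) / 2) =
      (z / (2 * Real.sqrt lam)) * Real.sqrt π * Real.Gamma ((n : ℝ) / 2) /
        Real.Gamma (((n : ℝ) + 1) / 2) := by
  have hn₀ : n ≠ 0 := by omega
  have hn₁ : (n : ℝ) - 1 ≠ 0 := by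
    have : (3 : ℝ) ≤ n := by exact_mod_cast hn
    linarith
  set C := z ^ ((n : ℝ) / ((n : ℝ) - 1))
  have hC : 0 < C := by positivity
  have hCrad : z ^ ((2 : ℝ) / ((n : ℝ) - 1)) = C ^ ((2 : ℝ) / n) := by
    rw [← rpow_mul hz.le]; field_simp
  have hCz : C ^ (((n : ℝ) - 1) / n) = z := by
    rw [← rpow_mul hz.le]; field_simp; exact rpow_one z
  have hGamma : ∫ θ in (0 : ℝ)..(π / 2), sin θ ^ (n - 1) =
      √π / 2 * Gamma ((n : ℝ) / 2) / Gamma (((n : ℝ) + 1) / 2) := by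
    rw [integral_sin_pow_zero_pi_div_two, Nat.cast_pred (Nat.pos_of_ne_zero hn₀)]
    ring_nf
  rw [hCrad]
  refine ⟨(intervalIntegrable_rpow_sub_rpow hC hn₀).const_mul _, ?_⟩
  rw [intervalIntegral.integral_const_mul, integral_rpow_sub_rpow hC hn₀, hCz, hGamma]
  field_simp

/-- The half-length `β(z)` of the vanishing interval of the comparison profile:
`∫₀^{z^{n/(n−1)}} (1/(n√λ))·(z^{2/(n−1)} − x^{2/n})^{−1/2} dx
  = (z/(2√λ))·√π·Γ(n/2)/Γ((n+1)/2)`. -/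
theorem beta_integral (n : ℕ) (hn : 3 ≤ n) (lam z : ℝ) (hlam : 0 < lam) (hz : 0 < z) :
    IntervalIntegrable
      (fun x : ℝ => (1 / (n * Real.sqrt lam)) *
        (z ^ ((2 : ℝ) / ((n : ℝ) - 1)) - x ^ ((2 : ℝ) / n)) ^ (-(1 : ℝ) / 2))
      volume 0 (z ^ ((n : ℝ) / ((n : ℝ) - 1))) ∧
    ∫ x in (0 : ℝ)..(z ^ ((n : ℝ) / ((n : ℝ) - 1))),
        (1 / (n * Real.sqrt lam)) *
          (z ^ ((2 : ℝ) / ((n : ℝ) - 1)) - x ^ ((2 : ℝ) / n)) ^ (-(1 : ℝ) / 2) =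
      (z / (2 * Real.sqrt lam)) * Real.sqrt π * Real.Gamma ((n : ℝ) / 2) /
        Real.Gamma (((n : ℝ) + 1) / 2) :=
  beta_integral_general n hn lam z hz
end

section
/- Let n ≥ 3 be an integer, λ > 0, z > 0, and b > 0. Suppose f : [0, b] → ℝ is continuous, continuously differentiable on [0, b), twice differentiable on [0, b), and satisfies: f''(v) = −λ·n·f(v)^{(2−n)/n} and f(v) > 0 for all v ∈ [0, b), f(0) = z^{n/(n−1)}, f'(0) = 0, and f(b) = 0. Then b = (z/(2√λ))·√π·Γ(n/2)/Γ((n+1)/2). -/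
/-!
Since `f'' < 0` and `f'(0) = 0`, `f' < 0` on `(0, b)`. Multiplying the equation by `f'` gives the
conserved energy `f'² + λ n² f^{2/n} = λ n² f(0)^{2/n}`, hence
`f' = -n √λ √(f(0)^{2/n} - f^{2/n})`. Substituting `f^{1/n} = f(0)^{1/n} sin θ` turns this into
`sin^{n-1} θ · θ' = -√λ / z`, and since `θ` runs from `π/2` to `0` on `[0, b]`,
`√λ b / z = ∫₀^{π/2} sin^{n-1}`, a Wallis integral equal to `(√π / 2) Γ(n/2) / Γ((n+1)/2)`.
-/

open Set Real

theorem integral_sin_pow_eq_Gamma (k : ℕ) :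
    ∫ x in (0 : ℝ)..π / 2, sin x ^ k = √π / 2 * Gamma ((k + 1) / 2) / Gamma (k / 2 + 1) := by
  induction k using Nat.twoStepInduction with
  | zero =>
    have hπ : √π ≠ 0 := by positivity
    norm_num [Gamma_one_half_eq]
    field_simp
    rw [sq_sqrt pi_pos.le]
  | one =>
    have hπ : √π ≠ 0 := by positivity
    have h32 : Gamma (3 / 2) = √π / 2 := by
      rw [show (3 / 2 : ℝ) = 1 / 2 + 1 by norm_num, Gamma_add_one (by norm_num), Gamma_one_half_eq]
      ring
    norm_num [integral_sin, h32]
    field_simp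
  | more k ih _ =>
    have hrec := integral_sin_pow (a := 0) (b := π / 2) k
    rw [sin_zero, cos_pi_div_two] at hrec
    have hA : Gamma ((k + 1) / 2) ≠ 0 := (Gamma_pos_of_pos (by positivity)).ne'
    have hB : Gamma (k / 2 + 1) ≠ 0 := (Gamma_pos_of_pos (by positivity)).ne'
    rw [hrec, ih]
    push_cast
    rw [show ((k : ℝ) + 2 + 1) / 2 = (k + 1) / 2 + 1 by ring,
      show ((k : ℝ) + 2) / 2 + 1 = (k / 2 + 1) + 1 by ring,
      Gamma_add_one (by positivity : ((k : ℝ) + 1) / 2 ≠ 0),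
      Gamma_add_one (by positivity : (k : ℝ) / 2 + 1 ≠ 0)]
    field_simp
    ring

-- A change of variables `t = θ v` that needs no integrability of `θ'`, which here blows up at `b`.
theorem mul_sub_eq_integral_of_hasDerivAt_comp {h θ : ℝ → ℝ} {a b κ : ℝ}
    (hh : Continuous h) (hab : a < b) (hθc : ContinuousOn θ (Icc a b))
    (hθ : ∀ v ∈ Ioo a b, ∃ θ', HasDerivAt θ θ' v ∧ h (θ v) * θ' = -κ) :
    κ * (b - a) = ∫ t in θ b..θ a, h t := by
  choose! θ' hθ' hκ using hθ
  have hH (x : ℝ) : HasDerivAt (fun y ↦ ∫ t in θ a..y, h t) (h x) x :=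
    hh.integral_hasStrictDerivAt _ x |>.hasDerivAt
  obtain ⟨c, hc, hslope⟩ := exists_hasDerivAt_eq_slope _ _ hab
    ((continuous_iff_continuousAt.2 fun x ↦ (hH x).continuousAt).comp_continuousOn hθc)
    fun v hv ↦ (hH (θ v)).comp v (hθ' v hv)
  rw [hκ c hc, Function.comp_apply, Function.comp_apply, intervalIntegral.integral_same,
    sub_zero, eq_div_iff (sub_pos.2 hab).ne'] at hslope
  rw [intervalIntegral.integral_symm, ← hslope]
  ring

theorem sq_add_comp_eq_of_hasDerivAt {f F G g : ℝ → ℝ} {a b v : ℝ}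
    (hFc : ContinuousOn F (Ico a b)) (hGc : ContinuousOn (G ∘ f) (Ico a b))
    (hf : ∀ w ∈ Ioo a b, HasDerivAt f (F w) w) (hF : ∀ w ∈ Ioo a b, HasDerivAt F (-g (f w)) w)
    (hG : ∀ w ∈ Ioo a b, HasDerivAt G (2 * g (f w)) (f w)) (hv : v ∈ Ico a b) :
    F v ^ 2 + G (f v) = F a ^ 2 + G (f a) := by
  rcases hv.1.eq_or_lt with rfl | hav
  · rfl
  have hsub : Ioo a v ⊆ Ioo a b := Ioo_subset_Ioo_right hv.2.le
  obtain ⟨c, -, hslope⟩ := exists_hasDerivAt_eq_slope (fun w ↦ F w ^ 2 + G (f w)) (fun _ ↦ 0) hav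
    (((hFc.pow 2).add hGc).mono (Icc_subset_Ico_right hv.2))
    fun w hw ↦ (((hF w (hsub hw)).pow 2).add ((hG w (hsub hw)).comp w (hf w (hsub hw)))).congr_deriv
      (by ring)
  rw [eq_comm, div_eq_zero_iff, sub_eq_zero] at hslope
  exact hslope.resolve_right (sub_pos.2 hav).ne'

structure IsProfileSolution (lam N b : ℝ) (f F : ℝ → ℝ) : Prop where
  continuousOn : ContinuousOn f (Icc 0 b)
  continuousOn_deriv : ContinuousOn F (Ico 0 b)
  hasDerivAt : ∀ v ∈ Ioo 0 b, HasDerivAt f (F v) v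
  hasDerivAt_deriv : ∀ v ∈ Ioo 0 b, HasDerivAt F (-lam * N * f v ^ ((2 - N) / N)) v
  pos : ∀ v ∈ Ico 0 b, 0 < f v
  deriv_zero : F 0 = 0

namespace IsProfileSolution

variable {lam N b : ℝ} {f F : ℝ → ℝ}

theorem of_derivWithin
    (hfc : ContinuousOn f (Icc 0 b))
    (hf : ∀ v ∈ Ico 0 b, DifferentiableWithinAt ℝ f (Ico 0 b) v)
    (hf' : ∀ v ∈ Ico 0 b, DifferentiableWithinAt ℝ (derivWithin f (Ico 0 b)) (Ico 0 b) v)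
    (hODE : ∀ v ∈ Ico 0 b, derivWithin (derivWithin f (Ico 0 b)) (Ico 0 b) v =
      -lam * N * f v ^ ((2 - N) / N))
    (hpos : ∀ v ∈ Ico 0 b, 0 < f v) (h0 : derivWithin f (Ico 0 b) 0 = 0) :
    IsProfileSolution lam N b f (derivWithin f (Ico 0 b)) where
  continuousOn := hfc
  continuousOn_deriv v hv := (hf' v hv).continuousWithinAt
  hasDerivAt v hv :=
    (hf v (Ioo_subset_Ico_self hv)).hasDerivWithinAt.hasDerivAt (Ico_mem_nhds hv.1 hv.2)
  hasDerivAt_deriv v hv := hODE v (Ioo_subset_Ico_self hv) ▸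
    (hf' v (Ioo_subset_Ico_self hv)).hasDerivWithinAt.hasDerivAt (Ico_mem_nhds hv.1 hv.2)
  pos := hpos
  deriv_zero := h0

theorem sq_deriv_eq (h : IsProfileSolution lam N b f F) (hN : 0 < N) {v : ℝ} (hv : v ∈ Ico 0 b) :
    F v ^ 2 = lam * N ^ 2 * (f 0 ^ (2 / N) - f v ^ (2 / N)) := by
  have hG (w : ℝ) (hw : w ∈ Ioo 0 b) : HasDerivAt (fun y ↦ lam * N ^ 2 * y ^ (2 / N))
      (2 * (lam * N * f w ^ ((2 - N) / N))) (f w) := by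
    refine ((hasDerivAt_rpow_const (Or.inl (h.pos w (Ioo_subset_Ico_self hw)).ne')).const_mul
      _).congr_deriv ?_
    rw [show 2 / N - 1 = (2 - N) / N by field_simp]
    field_simp
  have henergy := sq_add_comp_eq_of_hasDerivAt (G := fun y ↦ lam * N ^ 2 * y ^ (2 / N))
    (g := fun y ↦ lam * N * y ^ ((2 - N) / N)) h.continuousOn_deriv
    ((continuous_const.mul (continuous_rpow_const (by positivity))).comp_continuousOn
      (h.continuousOn.mono Ico_subset_Icc_self))
    h.hasDerivAt (fun w hw ↦ by simpa only [neg_mul] using h.hasDerivAt_deriv w hw) hG hv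
  rw [h.deriv_zero] at henergy
  linear_combination henergy

theorem deriv_neg (h : IsProfileSolution lam N b f F) (hlam : 0 < lam) (hN : 0 < N) {v : ℝ}
    (hv : v ∈ Ioo 0 b) : F v < 0 := by
  have hanti : StrictAntiOn F (Ico 0 b) := by
    refine strictAntiOn_of_hasDerivWithinAt_neg (f' := fun w ↦ -lam * N * f w ^ ((2 - N) / N))
      (convex_Ico 0 b) h.continuousOn_deriv
      (fun w hw ↦ ?_) fun w hw ↦ ?_ <;> rw [interior_Ico] at hw
    · rw [interior_Ico]
      exact (h.hasDerivAt_deriv w hw).hasDerivWithinAt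
    · have hfw := rpow_pos_of_pos (h.pos w (Ioo_subset_Ico_self hw)) ((2 - N) / N)
      simp only [neg_mul, neg_lt_zero]
      positivity
  simpa only [h.deriv_zero] using hanti ⟨le_rfl, hv.1.trans hv.2⟩ (Ioo_subset_Ico_self hv) hv.1

theorem strictAntiOn (h : IsProfileSolution lam N b f F) (hlam : 0 < lam) (hN : 0 < N) :
    StrictAntiOn f (Icc 0 b) :=
  strictAntiOn_of_hasDerivWithinAt_neg (convex_Icc 0 b) h.continuousOn
    (fun w hw ↦ by rw [interior_Icc] at hw ⊢; exact (h.hasDerivAt w hw).hasDerivWithinAt)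
    fun w hw ↦ by rw [interior_Icc] at hw; exact h.deriv_neg hlam hN hw

theorem deriv_eq (h : IsProfileSolution lam N b f F) (hlam : 0 < lam) (hN : 0 < N) {v : ℝ}
    (hv : v ∈ Ioo 0 b) : F v = -(N * √lam * √(f 0 ^ (2 / N) - f v ^ (2 / N))) := by
  rw [← neg_neg (F v), ← abs_of_neg (h.deriv_neg hlam hN hv), ← sqrt_sq_eq_abs,
    h.sq_deriv_eq hN (Ioo_subset_Ico_self hv), sqrt_mul (by positivity), sqrt_mul hlam.le,
    sqrt_sq hN.le]
  ring

theorem sin_pow_mul_hasDerivAt_arcsin {k : ℕ} (h : IsProfileSolution lam N b f F) (hlam : 0 < lam)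
    (hk : (k : ℝ) = N - 1) {v : ℝ} (hv : v ∈ Ioo 0 b) :
    ∃ θ', HasDerivAt (fun w ↦ arcsin (f w ^ (1 / N) / f 0 ^ (1 / N))) θ' v ∧
      sin (arcsin (f v ^ (1 / N) / f 0 ^ (1 / N))) ^ k * θ' = -(√lam / f 0 ^ ((N - 1) / N)) := by
  have hN : 0 < N := by linarith [k.cast_nonneg (α := ℝ)]
  have h0 : (0 : ℝ) ∈ Icc 0 b := ⟨le_rfl, (hv.1.trans hv.2).le⟩
  have hy : 0 < f v := h.pos v (Ioo_subset_Ico_self hv)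
  have hy0 : f v < f 0 := h.strictAntiOn hlam hN h0 (Ioo_subset_Icc_self hv) hv.1
  have hf0 : 0 < f 0 := hy.trans hy0
  set s := f v ^ (1 / N) with hs_def
  set c := f 0 ^ (1 / N) with hc_def
  have hs : 0 < s := by positivity
  have hsc : s < c := rpow_lt_rpow hy.le hy0 (by positivity)
  have hu1 : s / c < 1 := (div_lt_one (hs.trans hsc)).2 hsc
  have hsq : ∀ {x : ℝ}, 0 ≤ x → x ^ (2 / N) = (x ^ (1 / N)) ^ 2 := fun hx ↦ by
    rw [← rpow_mul_natCast hx]; ring_nf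
  have hpow : ∀ {x : ℝ}, 0 ≤ x → (x ^ (1 / N)) ^ k = x ^ ((N - 1) / N) := fun hx ↦ by
    rw [← rpow_mul_natCast hx, hk, one_div_mul_eq_div]
  have hc : 0 < c := hs.trans hsc
  have hθ : HasDerivAt (fun w ↦ arcsin (f w ^ (1 / N) / c))
      (1 / √(1 - (s / c) ^ 2) * (F v * (1 / N) * f v ^ (1 / N - 1) / c)) v :=
    (hasDerivAt_arcsin (by linarith [div_pos hs hc]) hu1.ne).comp
      (h := fun w ↦ f w ^ (1 / N) / c) v
      (((h.hasDerivAt v hv).rpow_const (Or.inl hy.ne')).div_const c)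
  refine ⟨_, hθ, ?_⟩
  have hsqrt : √(1 - (s / c) ^ 2) = √(c ^ 2 - s ^ 2) / c := by
    rw [show 1 - (s / c) ^ 2 = (c ^ 2 - s ^ 2) / c ^ 2 by field_simp,
      sqrt_div (by nlinarith), sqrt_sq hc.le]
  have hsk : s ^ k * s = f v := by
    rw [hpow hy.le, ← rpow_add hy, ← add_div, sub_add_cancel, div_self hN.ne', rpow_one]
  have hD : 0 < √(c ^ 2 - s ^ 2) := sqrt_pos.2 (by nlinarith)
  rw [sin_arcsin (by linarith [div_pos hs hc]) hu1.le, h.deriv_eq hlam hN hv, hsq hf0.le,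
    hsq hy.le, ← hpow hf0.le, rpow_sub_one hy.ne', hsqrt, ← hs_def, ← hc_def, ← hsk, div_pow]
  field_simp

theorem mul_eq_integral_sin_pow {k : ℕ} (h : IsProfileSolution lam N b f F) (hlam : 0 < lam)
    (hk : (k : ℝ) = N - 1) (hb : 0 < b) (hfb : f b = 0) :
    √lam / f 0 ^ ((N - 1) / N) * b = ∫ t in (0 : ℝ)..π / 2, sin t ^ k := by
  have hN : 0 < N := by linarith [k.cast_nonneg (α := ℝ)]
  have hf0 : 0 < f 0 := h.pos 0 ⟨le_rfl, hb⟩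
  have hθc : ContinuousOn (fun w ↦ arcsin (f w ^ (1 / N) / f 0 ^ (1 / N))) (Icc 0 b) :=
    continuous_arcsin.comp_continuousOn
      ((h.continuousOn.rpow_const fun _ _ ↦ Or.inr (by positivity)).div_const _)
  have key := mul_sub_eq_integral_of_hasDerivAt_comp (continuous_sin.pow k) hb hθc
    fun v hv ↦ h.sin_pow_mul_hasDerivAt_arcsin hlam hk hv
  simpa [hfb, zero_rpow (inv_pos.2 hN).ne', div_self (rpow_pos_of_pos hf0 _).ne'] using key

end IsProfileSolution

theorem first_zero_of_profile_general (n : ℕ) (hn : 3 ≤ n) (lam z b : ℝ)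
    (hlam : 0 < lam) (hz : 0 < z) (hb : 0 < b)
    (f : ℝ → ℝ)
    (hfcont : ContinuousOn f (Icc 0 b))
    (hfdiff : ∀ v ∈ Ico 0 b, DifferentiableWithinAt ℝ f (Ico 0 b) v)
    (hf'diff : ∀ v ∈ Ico 0 b,
      DifferentiableWithinAt ℝ (derivWithin f (Ico 0 b)) (Ico 0 b) v)
    (hODE : ∀ v ∈ Ico 0 b,
      derivWithin (derivWithin f (Ico 0 b)) (Ico 0 b) v =
        -lam * n * f v ^ ((2 - (n : ℝ)) / n))
    (hfpos : ∀ v ∈ Ico 0 b, 0 < f v)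
    (hf0 : f 0 = z ^ ((n : ℝ) / ((n : ℝ) - 1)))
    (hf'0 : derivWithin f (Ico 0 b) 0 = 0)
    (hfb : f b = 0) :
    b = (z / (2 * Real.sqrt lam)) * Real.sqrt π * Real.Gamma ((n : ℝ) / 2) /
      Real.Gamma (((n : ℝ) + 1) / 2) := by
  have hk : ((n - 1 : ℕ) : ℝ) = n - 1 := by rw [Nat.cast_sub (by omega), Nat.cast_one]
  have hn1 : (0 : ℝ) < n - 1 := by rw [← hk]; exact_mod_cast (by omega : 0 < n - 1)
  have hscale : f 0 ^ (((n : ℝ) - 1) / n) = z := by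
    rw [hf0, ← rpow_mul hz.le, div_mul_div_cancel₀' (by positivity), div_self hn1.ne', rpow_one]
  have key := (IsProfileSolution.of_derivWithin hfcont hfdiff hf'diff hODE hfpos
    hf'0).mul_eq_integral_sin_pow hlam hk hb hfb
  rw [hscale, integral_sin_pow_eq_Gamma, hk, sub_add_cancel,
    show ((n : ℝ) - 1) / 2 + 1 = (n + 1) / 2 by ring] at key
  have hlam' : 0 < √lam := sqrt_pos.2 hlam
  calc b = z / √lam * (√lam / z * b) := by field_simp
    _ = _ := by rw [key]; ring

/-- The first positive zero of the solution of `f'' = −λ n f^{(2−n)/n}` with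
`f(0) = z^{n/(n−1)}`, `f'(0) = 0` is exactly `β(z) = (z/(2√λ))·√π·Γ(n/2)/Γ((n+1)/2)`. -/
theorem first_zero_of_profile (n : ℕ) (hn : 3 ≤ n) (lam z b : ℝ)
    (hlam : 0 < lam) (hz : 0 < z) (hb : 0 < b)
    (f : ℝ → ℝ)
    (hfcont : ContinuousOn f (Icc 0 b))
    (hfdiff : ∀ v ∈ Ico 0 b, DifferentiableWithinAt ℝ f (Ico 0 b) v)
    (hf'cont : ContinuousOn (derivWithin f (Ico 0 b)) (Ico 0 b))
    (hf'diff : ∀ v ∈ Ico 0 b,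
      DifferentiableWithinAt ℝ (derivWithin f (Ico 0 b)) (Ico 0 b) v)
    (hODE : ∀ v ∈ Ico 0 b,
      derivWithin (derivWithin f (Ico 0 b)) (Ico 0 b) v =
        -lam * n * f v ^ ((2 - (n : ℝ)) / n))
    (hfpos : ∀ v ∈ Ico 0 b, 0 < f v)
    (hf0 : f 0 = z ^ ((n : ℝ) / ((n : ℝ) - 1)))
    (hf'0 : derivWithin f (Ico 0 b) 0 = 0)
    (hfb : f b = 0) :
    b = (z / (2 * Real.sqrt lam)) * Real.sqrt π * Real.Gamma ((n : ℝ) / 2) /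
      Real.Gamma (((n : ℝ) + 1) / 2) :=
  first_zero_of_profile_general n hn lam z b hlam hz hb f hfcont hfdiff hf'diff hODE hfpos hf0 hf'0
    hfb
end

section
/- Let n ≥ 3 be an integer, λ > 0, and a < b real numbers. Let F : [a, b] → (0, ∞) be continuous and positive, and suppose that for every v₀ ∈ (a, b) there exist σ > 0 and a twice continuously differentiable function U : (v₀ − σ, v₀ + σ) → ℝ with U ≥ F on (v₀ − σ, v₀ + σ) ∩ [a, b], U(v₀) = F(v₀), and U''(v₀) ≤ −λ·n·U(v₀)^{(2−n)/n}. Let f : [a, b] → ℝ be continuous, twice differentiable on (a, b), with f(v) > 0 and f''(v) = −λ·n·f(v)^{(2−n)/n} for all v ∈ (a, b), and assume f(a) < F(a) and f(b) < F(b). Then f(v) ≤ F(v) for all v ∈ [a, b]. -/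
/-!
Suppose `f > F` somewhere. Since `f < F` at the endpoints, `f - F` attains a positive maximum at
an interior point `c`, and the barrier `U` at `c` touches `F` from above there, so `f - U` has a
local maximum at `c` and `f''(c) ≤ U''(c)`. Writing `φ(u) = -λ n u ^ ((2 - n) / n)`, this gives
`φ(f c) = f''(c) ≤ U''(c) ≤ φ(U c) = φ(F c)`, contradicting the strict monotonicity of `φ` on
`(0, ∞)` (the exponent is negative for `n ≥ 3`) since `F c < f c`.
-/

open Set Filter Real Topology

/-- If `f''(x) > 0`, the second-derivative test makes `x` a local minimum as well, so `f` is
locally constant and `f''(x) = 0`. -/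
theorem IsLocalMax.deriv_deriv_nonpos {f : ℝ → ℝ} {x : ℝ} (hmax : IsLocalMax f x)
    (hc : ContinuousAt f x) : deriv (deriv f) x ≤ 0 := by
  by_contra! hpos
  have hmin : IsLocalMin f x := isLocalMin_of_deriv_deriv_pos hpos hmax.deriv_eq_zero hc
  have hconst : f =ᶠ[𝓝 x] fun _ ↦ f x :=
    (hmax.and hmin).mono fun _ hy ↦ le_antisymm hy.1 hy.2
  have hderiv : deriv f =ᶠ[𝓝 x] fun _ ↦ 0 :=
    hconst.eventuallyEq_nhds.mono fun _ hy ↦ by rw [hy.deriv_eq, deriv_const]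
  rw [hderiv.deriv_eq, deriv_const] at hpos
  exact hpos.false

theorem deriv_deriv_le_of_isLocalMax_sub {f U : ℝ → ℝ} {c : ℝ}
    (hmax : IsLocalMax (fun x ↦ f x - U x) c)
    (hf : ∀ᶠ x in 𝓝 c, DifferentiableAt ℝ f x) (hf' : DifferentiableAt ℝ (deriv f) c)
    (hU : ContDiffAt ℝ 2 U c) :
    deriv (deriv f) c ≤ deriv (deriv U) c := by
  have hUd : ∀ᶠ x in 𝓝 c, DifferentiableAt ℝ U x :=
    (hU.eventually (by simp)).mono fun _ hx ↦ hx.differentiableAt (by simp)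
  have hU' : DifferentiableAt ℝ (deriv U) c :=
    (hU.derivWithin (m := 1) (by norm_num)).differentiableAt (by simp)
  have hderiv : deriv (fun x ↦ f x - U x) =ᶠ[𝓝 c] fun x ↦ deriv f x - deriv U x :=
    (hf.and hUd).mono fun _ hx ↦ deriv_sub hx.1 hx.2
  have hnonpos := hmax.deriv_deriv_nonpos (hf.self_of_nhds.sub hUd.self_of_nhds).continuousAt
  rw [hderiv.deriv_eq, deriv_fun_sub hf' hU'] at hnonpos
  linarith

theorem isLocalMax_sub_of_isMaxOn_sub {X : Type*} [TopologicalSpace X] {f F U : X → ℝ}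
    {s : Set X} {c : X} (hmax : IsMaxOn (fun x ↦ f x - F x) s c) (hs : s ∈ 𝓝 c)
    (hFU : ∀ᶠ x in 𝓝 c, F x ≤ U x) (hUc : U c = F c) :
    IsLocalMax (fun x ↦ f x - U x) c := by
  filter_upwards [hs, hFU] with x hx hFUx
  have : f x - F x ≤ f c - F c := hmax hx
  simp only [hUc]
  linarith

theorem exists_mem_Ioo_isMaxOn_pos {g : ℝ → ℝ} {a b : ℝ} (hg : ContinuousOn g (Icc a b))
    (ha : g a ≤ 0) (hb : g b ≤ 0) {v : ℝ} (hv : v ∈ Icc a b) (hgv : 0 < g v) :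
    ∃ c ∈ Ioo a b, IsMaxOn g (Icc a b) c ∧ 0 < g c := by
  obtain ⟨c, hc, hmax⟩ := isCompact_Icc.exists_isMaxOn ⟨v, hv⟩ hg
  have hgc : 0 < g c := hgv.trans_le (hmax hv)
  have hca : c ≠ a := by rintro rfl; linarith
  have hcb : c ≠ b := by rintro rfl; linarith
  exact ⟨c, ⟨hc.1.lt_of_ne' hca, hc.2.lt_of_ne hcb⟩, hmax, hgc⟩

theorem strictMonoOn_mul_rpow_of_neg {k e : ℝ} (hk : k < 0) (he : e < 0) :
    StrictMonoOn (fun u : ℝ ↦ k * u ^ e) (Ioi 0) := fun _ hu _ _ huw ↦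
  mul_lt_mul_of_neg_left (rpow_lt_rpow_of_neg hu huw he) hk

theorem ode_touching_comparison_general (n : ℕ) (hn : 3 ≤ n) (lam : ℝ) (hlam : 0 < lam)
    (a b : ℝ) (F f : ℝ → ℝ)
    (hFcont : ContinuousOn F (Icc a b))
    (hFpos : ∀ v ∈ Icc a b, 0 < F v)
    (hbarrier : ∀ v₀ ∈ Ioo a b, ∃ σ > 0, ∃ U : ℝ → ℝ,
      ContDiffOn ℝ 2 U (Ioo (v₀ - σ) (v₀ + σ)) ∧
      (∀ v ∈ Ioo (v₀ - σ) (v₀ + σ) ∩ Icc a b, F v ≤ U v) ∧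
      U v₀ = F v₀ ∧
      deriv (deriv U) v₀ ≤ -lam * n * (U v₀) ^ ((2 - (n : ℝ)) / n))
    (hfcont : ContinuousOn f (Icc a b))
    (hfdiff : ∀ v ∈ Ioo a b, DifferentiableAt ℝ f v)
    (hf'diff : ∀ v ∈ Ioo a b, DifferentiableAt ℝ (deriv f) v)
    (hODE : ∀ v ∈ Ioo a b, deriv (deriv f) v = -lam * n * f v ^ ((2 - (n : ℝ)) / n))
    (hfa : f a < F a) (hfb : f b < F b) :
    ∀ v ∈ Icc a b, f v ≤ F v := by
  intro v hv
  by_contra! hFv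
  obtain ⟨c, hc, hmax, hgc⟩ := exists_mem_Ioo_isMaxOn_pos (g := fun x ↦ f x - F x)
    (hfcont.sub hFcont) (by linarith) (by linarith) hv (by linarith)
  obtain ⟨σ, hσ, U, hU, hFU, hUc, hU''⟩ := hbarrier c hc
  have hIcc : Icc a b ∈ 𝓝 c := Icc_mem_nhds hc.1 hc.2
  have hIoo : Ioo (c - σ) (c + σ) ∈ 𝓝 c := Ioo_mem_nhds (by linarith) (by linarith)
  have hlocmax : IsLocalMax (fun x ↦ f x - U x) c :=
    isLocalMax_sub_of_isMaxOn_sub hmax hIcc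
      (by filter_upwards [hIoo, hIcc] with x h₁ h₂ using hFU x ⟨h₁, h₂⟩) hUc
  have hf''U'' : deriv (deriv f) c ≤ deriv (deriv U) c :=
    deriv_deriv_le_of_isLocalMax_sub hlocmax
      (eventually_of_mem (Ioo_mem_nhds hc.1 hc.2) hfdiff) (hf'diff c hc)
      (hU.contDiffAt hIoo)
  have hn' : (3 : ℝ) ≤ n := by exact_mod_cast hn
  have hexp : (2 - (n : ℝ)) / n < 0 := div_neg_of_neg_of_pos (by linarith) (by linarith)
  have hFc : 0 < F c := hFpos c (Ioo_subset_Icc_self hc)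
  have hφ : -lam * n * F c ^ ((2 - (n : ℝ)) / n) < -lam * n * f c ^ ((2 - (n : ℝ)) / n) :=
    strictMonoOn_mul_rpow_of_neg (by nlinarith) hexp hFc (hFc.trans (by linarith))
      (by linarith : F c < f c)
  rw [hODE c hc] at hf''U''
  rw [hUc] at hU''
  linarith

/-- Comparison principle: no solution of `f'' = −λ n f^{(2−n)/n}` can touch from below
a positive continuous function `F` satisfying `F'' ≤ −λnF^{(2−n)/n}` in the barrier
sense, provided `f < F` at both endpoints. -/
theorem ode_touching_comparison (n : ℕ) (hn : 3 ≤ n) (lam : ℝ) (hlam : 0 < lam)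
    (a b : ℝ) (hab : a < b) (F f : ℝ → ℝ)
    (hFcont : ContinuousOn F (Icc a b))
    (hFpos : ∀ v ∈ Icc a b, 0 < F v)
    (hbarrier : ∀ v₀ ∈ Ioo a b, ∃ σ > 0, ∃ U : ℝ → ℝ,
      ContDiffOn ℝ 2 U (Ioo (v₀ - σ) (v₀ + σ)) ∧
      (∀ v ∈ Ioo (v₀ - σ) (v₀ + σ) ∩ Icc a b, F v ≤ U v) ∧
      U v₀ = F v₀ ∧
      deriv (deriv U) v₀ ≤ -lam * n * (U v₀) ^ ((2 - (n : ℝ)) / n))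
    (hfcont : ContinuousOn f (Icc a b))
    (hfdiff : ∀ v ∈ Ioo a b, DifferentiableAt ℝ f v)
    (hf'diff : ∀ v ∈ Ioo a b, DifferentiableAt ℝ (deriv f) v)
    (hfpos : ∀ v ∈ Ioo a b, 0 < f v)
    (hODE : ∀ v ∈ Ioo a b, deriv (deriv f) v = -lam * n * f v ^ ((2 - (n : ℝ)) / n))
    (hfa : f a < F a) (hfb : f b < F b) :
    ∀ v ∈ Icc a b, f v ≤ F v :=
  ode_touching_comparison_general n hn lam hlam a b F f hFcont hFpos hbarrier hfcont hfdiff hf'diff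
    hODE hfa hfb
end

section
/- Let n ≥ 3 be an integer, λ > 0, z > 0, and set β = (z/(2√λ))·√π·Γ(n/2)/Γ((n+1)/2). Then there exists a function f : [−β, β] → ℝ such that: f is continuous on [−β, β] and twice continuously differentiable on (−β, β); f(v) > 0 for all v ∈ (−β, β); f(−β) = f(β) = 0; f(0) = z^{n/(n−1)} and f'(0) = 0; f''(v) = −λ·n·f(v)^{(2−n)/n} and f'(v)² = λ·n²·z^{2/(n−1)} − λ·n²·f(v)^{2/n} for all v ∈ (−β, β); f is even, i.e. f(−v) = f(v) for all v ∈ [−β, β]; and f'(v) → √λ·n·z^{1/(n−1)} as v → (−β)⁺. -/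
open Set Filter Real Topology

/-!
The substitution `f v = c · cos (θ (a v)) ^ n` turns `f'' = -λ n f^{(2-n)/n}` into the
first-order equation `θ' = cos^{1-n} θ`, so `θ` is the inverse of `φ ↦ ∫₀^φ cos^{n-1}`.
Hence `f` vanishes where `θ (a v) = ±π/2`, i.e. at `v = ±a⁻¹ ∫₀^{π/2} cos^{n-1}`, and this
Wallis integral equals `(√π/2) Γ(n/2) / Γ((n+1)/2)`. The amplitude `c = z^{n/(n-1)}` is
prescribed by `f 0`, and the rate `a = √λ / z` is the one for which `c a² = λ c^{(2-n)/n}`.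
-/

theorem integral_cos_pow_eq_Gamma (k : ℕ) :
    ∫ x in (0 : ℝ)..π / 2, cos x ^ k
      = √π / 2 * Gamma ((k + 1) / 2) / Gamma (k / 2 + 1) := by
  induction k using Nat.twoStepInduction with
  | zero =>
    norm_num [Gamma_one_half_eq, div_mul_eq_mul_div, mul_self_sqrt pi_pos.le]
  | one =>
    rw [show ((1 : ℕ) + 1 : ℝ) / 2 = 1 by norm_num,
      show ((1 : ℕ) : ℝ) / 2 + 1 = 1 / 2 + 1 by norm_num, Gamma_add_one one_half_pos.ne',
      Gamma_one_half_eq]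
    norm_num [integral_cos]
    field_simp
  | more k ih _ =>
    have hk₁ : ((k : ℝ) + 1) / 2 ≠ 0 := by positivity
    have hk₂ : (k : ℝ) / 2 + 1 ≠ 0 := by positivity
    rw [integral_cos_pow, ih]
    simp only [cos_pi_div_two, sin_zero, mul_zero, zero_mul, zero_pow k.succ_ne_zero, sub_zero,
      zero_div, zero_add]
    rw [show ((k + 2 : ℕ) + 1 : ℝ) / 2 = ((k : ℝ) + 1) / 2 + 1 by push_cast; ring,
      show ((k + 2 : ℕ) : ℝ) / 2 + 1 = ((k : ℝ) / 2 + 1) + 1 by push_cast; ring,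
      Gamma_add_one hk₁, Gamma_add_one hk₂]
    have := (Gamma_pos_of_pos (by positivity : (0 : ℝ) < k / 2 + 1)).ne'
    field_simp

-- Off `(-π/2, π/2)` the integrand is replaced by `1`; this makes its primitive an order
-- isomorphism of `ℝ` and does not change it on `[-π/2, π/2]`.
noncomputable def cosPowExt (k : ℕ) (t : ℝ) : ℝ := if |t| < π / 2 then cos t ^ k else 1

noncomputable def cosPowPrimitive (k : ℕ) (x : ℝ) : ℝ := ∫ t in (0 : ℝ)..x, cosPowExt k t

namespace cosPowExt

variable (k : ℕ)

theorem pos (t : ℝ) : 0 < cosPowExt k t := by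
  unfold cosPowExt
  split_ifs with h
  · exact pow_pos (cos_pos_of_mem_Ioo (abs_lt.1 h)) k
  · exact one_pos

theorem neg (t : ℝ) : cosPowExt k (-t) = cosPowExt k t := by
  simp only [cosPowExt, abs_neg, cos_neg]

theorem measurable : Measurable (cosPowExt k) :=
  Measurable.ite (measurableSet_lt (by fun_prop) measurable_const) (by fun_prop) measurable_const

theorem intervalIntegrable (a b : ℝ) :
    IntervalIntegrable (cosPowExt k) MeasureTheory.volume a b := by
  refine (intervalIntegrable_const (c := (1 : ℝ))).mono_fun' (measurable k).aestronglyMeasurable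
    (Eventually.of_forall fun t => ?_)
  dsimp only [cosPowExt]
  split_ifs with h
  · simpa [norm_pow] using pow_le_one₀ (abs_nonneg _) (abs_cos_le_one t)
  · simp

end cosPowExt

namespace cosPowPrimitive

variable (k : ℕ)

theorem strictMono : StrictMono (cosPowPrimitive k) := fun x y hxy => by
  have h := intervalIntegral.intervalIntegral_pos_of_pos_on (cosPowExt.intervalIntegrable k x y)
    (fun t _ => cosPowExt.pos k t) hxy
  rw [← intervalIntegral.integral_interval_sub_left (cosPowExt.intervalIntegrable k 0 y)
    (cosPowExt.intervalIntegrable k 0 x)] at h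
  exact sub_pos.1 h

theorem continuous : Continuous (cosPowPrimitive k) :=
  intervalIntegral.continuous_primitive (cosPowExt.intervalIntegrable k) 0

theorem neg (x : ℝ) : cosPowPrimitive k (-x) = -cosPowPrimitive k x := by
  have h := intervalIntegral.integral_comp_neg (a := 0) (b := x) (cosPowExt k)
  simp only [cosPowExt.neg, neg_zero] at h
  rw [cosPowPrimitive, cosPowPrimitive, intervalIntegral.integral_symm, h]

theorem eq_add_of_pi_div_two_le {x : ℝ} (hx : π / 2 ≤ x) :
    cosPowPrimitive k x = cosPowPrimitive k (π / 2) + (x - π / 2) := by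
  have hone : ∫ t in π / 2..x, cosPowExt k t = ∫ t in π / 2..x, (1 : ℝ) := by
    refine intervalIntegral.integral_congr fun t ht => if_neg ?_
    rw [uIcc_of_le hx] at ht
    exact not_lt.2 (ht.1.trans (le_abs_self t))
  rw [cosPowPrimitive, cosPowPrimitive, ← intervalIntegral.integral_add_adjacent_intervals
    (cosPowExt.intervalIntegrable k 0 (π / 2)) (cosPowExt.intervalIntegrable k (π / 2) x), hone,
    intervalIntegral.integral_const, smul_eq_mul, mul_one]

theorem tendsto_atTop : Tendsto (cosPowPrimitive k) atTop atTop := by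
  refine (tendsto_atTop_add_const_right _ (cosPowPrimitive k (π / 2) - π / 2) tendsto_id).congr'
    ((eventually_ge_atTop (π / 2)).mono fun x hx => ?_)
  rw [eq_add_of_pi_div_two_le k hx, id]
  ring

theorem tendsto_atBot : Tendsto (cosPowPrimitive k) atBot atBot := by
  have h := tendsto_neg_atTop_atBot.comp ((tendsto_atTop k).comp tendsto_neg_atBot_atTop)
  refine h.congr fun x => ?_
  simp [neg]

theorem hasDerivAt {x : ℝ} (hx : |x| < π / 2) :
    HasDerivAt (cosPowPrimitive k) (cos x ^ k) x := by
  have hcont : ContinuousAt (cosPowExt k) x := by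
    refine ((continuous_cos.pow k).continuousAt).congr ?_
    filter_upwards [(isOpen_lt continuous_abs continuous_const).mem_nhds hx] with t ht
    exact (if_pos ht).symm
  have h := intervalIntegral.integral_hasDerivAt_right (cosPowExt.intervalIntegrable k 0 x)
    ((cosPowExt.measurable k).stronglyMeasurable.stronglyMeasurableAtFilter) hcont
  rwa [cosPowExt, if_pos hx] at h

theorem pi_div_two_eq : cosPowPrimitive k (π / 2) = ∫ t in (0 : ℝ)..π / 2, cos t ^ k := by
  refine intervalIntegral.integral_congr_Ioo_of_le (by positivity) fun t ht => if_pos ?_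
  rw [abs_of_pos ht.1]
  exact ht.2

end cosPowPrimitive

noncomputable def cosPowPrimitiveIso (k : ℕ) : ℝ ≃o ℝ :=
  StrictMono.orderIsoOfSurjective _ (cosPowPrimitive.strictMono k)
    ((cosPowPrimitive.continuous k).surjective (cosPowPrimitive.tendsto_atTop k)
      (cosPowPrimitive.tendsto_atBot k))

noncomputable def modelPhase (n : ℕ) : ℝ ≃o ℝ := (cosPowPrimitiveIso (n - 1)).symm

noncomputable def modelHalfWidth (n : ℕ) : ℝ := cosPowPrimitive (n - 1) (π / 2)

namespace modelPhase

variable (n : ℕ)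

theorem primitive_apply (x : ℝ) : cosPowPrimitive (n - 1) (modelPhase n x) = x :=
  (cosPowPrimitiveIso (n - 1)).apply_symm_apply x

theorem apply_primitive (x : ℝ) : modelPhase n (cosPowPrimitive (n - 1) x) = x :=
  (cosPowPrimitiveIso (n - 1)).symm_apply_apply x

theorem neg (x : ℝ) : modelPhase n (-x) = -modelPhase n x := by
  rw [← primitive_apply n x, ← cosPowPrimitive.neg, apply_primitive, apply_primitive]

theorem zero : modelPhase n 0 = 0 := by
  simpa [cosPowPrimitive] using apply_primitive n 0

theorem halfWidth : modelPhase n (modelHalfWidth n) = π / 2 :=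
  apply_primitive n _

theorem neg_halfWidth : modelPhase n (-modelHalfWidth n) = -(π / 2) := by
  rw [neg, halfWidth]

variable {n}

theorem abs_lt {x : ℝ} (hx : x ∈ Ioo (-modelHalfWidth n) (modelHalfWidth n)) :
    |modelPhase n x| < π / 2 := by
  have h₁ := (modelPhase n).strictMono hx.1
  have h₂ := (modelPhase n).strictMono hx.2
  rw [neg_halfWidth] at h₁
  rw [halfWidth] at h₂
  exact _root_.abs_lt.2 ⟨h₁, h₂⟩

theorem cos_pos {x : ℝ} (hx : x ∈ Ioo (-modelHalfWidth n) (modelHalfWidth n)) :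
    0 < cos (modelPhase n x) :=
  cos_pos_of_mem_Ioo (_root_.abs_lt.1 (abs_lt hx))

theorem hasDerivAt {x : ℝ} (hx : x ∈ Ioo (-modelHalfWidth n) (modelHalfWidth n)) :
    HasDerivAt (modelPhase n) (cos (modelPhase n x) ^ (n - 1))⁻¹ x :=
  .of_local_left_inverse (modelPhase n).continuous.continuousAt
    (cosPowPrimitive.hasDerivAt _ (abs_lt hx)) (pow_pos (cos_pos hx) _).ne'
    (Eventually.of_forall (primitive_apply n))

theorem contDiffOn :
    ContDiffOn ℝ 1 (modelPhase n) (Ioo (-modelHalfWidth n) (modelHalfWidth n)) := by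
  rw [show (1 : WithTop ℕ∞) = 0 + 1 from rfl, contDiffOn_succ_iff_deriv_of_isOpen isOpen_Ioo]
  refine ⟨fun x hx => (hasDerivAt hx).differentiableAt.differentiableWithinAt, by simp, ?_⟩
  rw [contDiffOn_zero]
  refine ContinuousOn.congr (f := fun x => (cos (modelPhase n x) ^ (n - 1))⁻¹) ?_
    fun x hx => (hasDerivAt hx).deriv
  exact ((continuous_cos.comp (modelPhase n).continuous).pow _).continuousOn.inv₀
    fun x hx => (pow_pos (cos_pos hx) _).ne'

end modelPhase

theorem modelHalfWidth_pos (n : ℕ) : 0 < modelHalfWidth n := by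
  simpa [modelHalfWidth, cosPowPrimitive] using
    cosPowPrimitive.strictMono (n - 1) (by positivity : 0 < π / 2)

theorem modelHalfWidth_eq {n : ℕ} (hn : n ≠ 0) :
    modelHalfWidth n = √π / 2 * Gamma (n / 2) / Gamma ((n + 1) / 2) := by
  rw [modelHalfWidth, cosPowPrimitive.pi_div_two_eq, integral_cos_pow_eq_Gamma,
    Nat.cast_sub (Nat.one_le_iff_ne_zero.2 hn)]
  congr 3 <;> ring

noncomputable def modelProfile (n : ℕ) (x : ℝ) : ℝ := cos (modelPhase n x) ^ n

namespace modelProfile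

variable {n : ℕ}

theorem continuous : Continuous (modelProfile n) :=
  (continuous_cos.comp (modelPhase n).continuous).pow n

theorem neg (x : ℝ) : modelProfile n (-x) = modelProfile n x := by
  rw [modelProfile, modelPhase.neg, cos_neg, modelProfile]

theorem zero : modelProfile n 0 = 1 := by
  rw [modelProfile, modelPhase.zero, cos_zero, one_pow]

theorem halfWidth (hn : n ≠ 0) : modelProfile n (modelHalfWidth n) = 0 := by
  rw [modelProfile, modelPhase.halfWidth, cos_pi_div_two, zero_pow hn]

variable {x : ℝ}

theorem pos (hx : x ∈ Ioo (-modelHalfWidth n) (modelHalfWidth n)) : 0 < modelProfile n x :=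
  pow_pos (modelPhase.cos_pos hx) n

theorem hasDerivAt (hx : x ∈ Ioo (-modelHalfWidth n) (modelHalfWidth n)) :
    HasDerivAt (modelProfile n) (-n * sin (modelPhase n x)) x := by
  refine (((hasDerivAt_cos _).comp x (modelPhase.hasDerivAt hx)).fun_pow n).congr_deriv ?_
  have := (pow_pos (modelPhase.cos_pos hx) (n - 1)).ne'
  simp only [Function.comp_apply]
  field_simp

theorem deriv_eq (hx : x ∈ Ioo (-modelHalfWidth n) (modelHalfWidth n)) :
    deriv (modelProfile n) x = -n * sin (modelPhase n x) :=
  (hasDerivAt hx).deriv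

theorem deriv_zero : deriv (modelProfile n) 0 = 0 := by
  rw [deriv_eq ⟨neg_lt_zero.2 (modelHalfWidth_pos n), modelHalfWidth_pos n⟩, modelPhase.zero,
    sin_zero, mul_zero]

theorem hasDerivAt_deriv (hx : x ∈ Ioo (-modelHalfWidth n) (modelHalfWidth n)) :
    HasDerivAt (deriv (modelProfile n))
      (-n * (cos (modelPhase n x) * (cos (modelPhase n x) ^ (n - 1))⁻¹)) x := by
  have h := ((hasDerivAt_sin _).comp x (modelPhase.hasDerivAt hx)).const_mul (-n : ℝ)
  exact h.congr_of_eventuallyEq (eventuallyEq_of_mem (isOpen_Ioo.mem_nhds hx) fun _ => deriv_eq)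

theorem deriv_deriv (hn : n ≠ 0) (hx : x ∈ Ioo (-modelHalfWidth n) (modelHalfWidth n)) :
    deriv (deriv (modelProfile n)) x = -n * modelProfile n x ^ ((2 - n) / n : ℝ) := by
  have hc := modelPhase.cos_pos hx
  have hexp : cos (modelPhase n x) * (cos (modelPhase n x) ^ (n - 1))⁻¹ =
      cos (modelPhase n x) ^ (2 - n : ℝ) := by
    rw [mul_inv_eq_iff_eq_mul₀ (pow_pos hc _).ne', ← rpow_natCast,
      Nat.cast_sub (Nat.one_le_iff_ne_zero.2 hn), ← rpow_add hc]
    norm_num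
  rw [(hasDerivAt_deriv hx).deriv, hexp, modelProfile, ← rpow_natCast _ n, ← rpow_mul hc.le,
    mul_div_cancel₀ _ (Nat.cast_ne_zero.2 hn)]

theorem deriv_sq (hn : n ≠ 0) (hx : x ∈ Ioo (-modelHalfWidth n) (modelHalfWidth n)) :
    deriv (modelProfile n) x ^ 2 = n ^ 2 - n ^ 2 * modelProfile n x ^ (2 / n : ℝ) := by
  have hc := modelPhase.cos_pos hx
  rw [deriv_eq hx, modelProfile, ← rpow_natCast _ n, ← rpow_mul hc.le,
    mul_div_cancel₀ _ (Nat.cast_ne_zero.2 hn), rpow_two]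
  linear_combination (n : ℝ) ^ 2 * sin_sq_add_cos_sq (modelPhase n x)

theorem contDiffOn :
    ContDiffOn ℝ 2 (modelProfile n) (Ioo (-modelHalfWidth n) (modelHalfWidth n)) := by
  rw [show (2 : WithTop ℕ∞) = 1 + 1 from rfl, contDiffOn_succ_iff_deriv_of_isOpen isOpen_Ioo]
  refine ⟨fun x hx => (hasDerivAt hx).differentiableAt.differentiableWithinAt, by simp, ?_⟩
  exact (contDiffOn_const.mul (contDiff_sin.comp_contDiffOn modelPhase.contDiffOn)).congr
    fun _ => deriv_eq

theorem tendsto_deriv :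
    Tendsto (deriv (modelProfile n)) (𝓝[>] (-modelHalfWidth n)) (𝓝 n) := by
  have h : Tendsto (fun x => -n * sin (modelPhase n x)) (𝓝[>] (-modelHalfWidth n))
      (𝓝 (-n * sin (modelPhase n (-modelHalfWidth n)))) :=
    ((continuous_const.mul (continuous_sin.comp (modelPhase n).continuous)).tendsto _).mono_left
      nhdsWithin_le_nhds
  rw [modelPhase.neg_halfWidth, sin_neg, sin_pi_div_two, mul_neg_one, neg_neg] at h
  exact h.congr' (eventuallyEq_of_mem (Ioo_mem_nhdsGT (neg_lt_self (modelHalfWidth_pos n)))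
    fun _ hx => (deriv_eq hx).symm)

end modelProfile

theorem deriv_const_mul_comp_const_mul (c a : ℝ) (u : ℝ → ℝ) :
    deriv (fun v => c * u (a * v)) = fun v => c * a * deriv u (a * v) := by
  ext v
  rw [deriv_const_mul_field, deriv_comp_mul_left, smul_eq_mul, mul_assoc]

theorem tendsto_const_mul_nhdsGT {a : ℝ} (ha : 0 < a) (x : ℝ) :
    Tendsto (a * ·) (𝓝[>] x) (𝓝[>] (a * x)) :=
  tendsto_nhdsWithin_iff.2 ⟨((continuous_const_mul a).tendsto x).mono_left nhdsWithin_le_nhds,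
    eventually_nhdsWithin_of_forall fun _ hv => mul_lt_mul_of_pos_left hv ha⟩

noncomputable def scaledModelProfile (n : ℕ) (lam z v : ℝ) : ℝ :=
  z ^ ((n : ℝ) / (n - 1)) * modelProfile n (√lam / z * v)

noncomputable def scaledHalfWidth (n : ℕ) (lam z : ℝ) : ℝ := z / √lam * modelHalfWidth n

namespace scaledModelProfile

variable {n : ℕ} {lam z : ℝ}

theorem amplitude_mul_rate (hn : n ≠ 1) (hz : 0 < z) :
    z ^ ((n : ℝ) / (n - 1)) * (√lam / z) = √lam * z ^ (1 / ((n : ℝ) - 1)) := by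
  have : (n : ℝ) - 1 ≠ 0 := sub_ne_zero.2 (Nat.cast_ne_one.2 hn)
  rw [show (n : ℝ) / (n - 1) = 1 / (n - 1) + 1 by field_simp; ring, rpow_add_one hz.ne']
  field_simp

theorem amplitude_rpow (hn : n ≠ 0) (hz : 0 < z) (q : ℝ) :
    (z ^ ((n : ℝ) / (n - 1))) ^ (q / n) = z ^ (q / ((n : ℝ) - 1)) := by
  have : (n : ℝ) ≠ 0 := Nat.cast_ne_zero.2 hn
  rw [← rpow_mul hz.le, div_mul_div_comm, mul_comm (n : ℝ) q, mul_div_mul_right _ _ this]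

theorem rate_mul_mem_Ioo (hlam : 0 < lam) (hz : 0 < z) {v : ℝ}
    (hv : v ∈ Ioo (-scaledHalfWidth n lam z) (scaledHalfWidth n lam z)) :
    √lam / z * v ∈ Ioo (-modelHalfWidth n) (modelHalfWidth n) := by
  have ha : 0 < √lam / z := div_pos (sqrt_pos.2 hlam) hz
  rw [scaledHalfWidth, ← inv_div, inv_mul_eq_div] at hv
  exact ⟨(div_lt_iff₀' ha).1 (neg_div (√lam / z) _ ▸ hv.1), (lt_div_iff₀' ha).1 hv.2⟩

theorem continuous : Continuous (scaledModelProfile n lam z) :=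
  continuous_const.mul (modelProfile.continuous.comp (continuous_const_mul _))

theorem contDiffOn (hlam : 0 < lam) (hz : 0 < z) :
    ContDiffOn ℝ 2 (scaledModelProfile n lam z)
      (Ioo (-scaledHalfWidth n lam z) (scaledHalfWidth n lam z)) :=
  contDiffOn_const.mul (modelProfile.contDiffOn.comp (contDiffOn_const.mul contDiffOn_id)
    fun _ hv => rate_mul_mem_Ioo hlam hz hv)

theorem pos (hlam : 0 < lam) (hz : 0 < z) {v : ℝ}
    (hv : v ∈ Ioo (-scaledHalfWidth n lam z) (scaledHalfWidth n lam z)) :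
    0 < scaledModelProfile n lam z v :=
  mul_pos (rpow_pos_of_pos hz _) (modelProfile.pos (rate_mul_mem_Ioo hlam hz hv))

theorem rate_mul_halfWidth (hlam : 0 < lam) (hz : 0 < z) :
    √lam / z * scaledHalfWidth n lam z = modelHalfWidth n := by
  have := sqrt_pos.2 hlam
  rw [scaledHalfWidth]
  field_simp

theorem halfWidth (hn : n ≠ 0) (hlam : 0 < lam) (hz : 0 < z) :
    scaledModelProfile n lam z (scaledHalfWidth n lam z) = 0 := by
  rw [scaledModelProfile, rate_mul_halfWidth hlam hz, modelProfile.halfWidth hn, mul_zero]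

theorem neg (v : ℝ) : scaledModelProfile n lam z (-v) = scaledModelProfile n lam z v := by
  rw [scaledModelProfile, mul_neg, modelProfile.neg, scaledModelProfile]

theorem zero : scaledModelProfile n lam z 0 = z ^ ((n : ℝ) / (n - 1)) := by
  rw [scaledModelProfile, mul_zero, modelProfile.zero, mul_one]

theorem deriv_eq : deriv (scaledModelProfile n lam z) =
    fun v => z ^ ((n : ℝ) / (n - 1)) * (√lam / z) * deriv (modelProfile n) (√lam / z * v) :=
  deriv_const_mul_comp_const_mul _ _ _

theorem deriv_zero : deriv (scaledModelProfile n lam z) 0 = 0 := by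
  rw [deriv_eq]
  beta_reduce
  rw [mul_zero, modelProfile.deriv_zero, mul_zero]

theorem deriv_deriv (hn : 2 ≤ n) (hlam : 0 < lam) (hz : 0 < z) {v : ℝ}
    (hv : v ∈ Ioo (-scaledHalfWidth n lam z) (scaledHalfWidth n lam z)) :
    deriv (deriv (scaledModelProfile n lam z)) v =
      -lam * n * scaledModelProfile n lam z v ^ ((2 - (n : ℝ)) / n) := by
  have hv' := rate_mul_mem_Ioo hlam hz hv
  have hexp : z ^ ((2 - (n : ℝ)) / (n - 1)) = z ^ (1 / ((n : ℝ) - 1)) / z := by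
    have : (n : ℝ) - 1 ≠ 0 := sub_ne_zero.2 (Nat.cast_ne_one.2 (by omega))
    rw [← rpow_sub_one hz.ne']
    congr 1
    field_simp
    ring
  rw [deriv_eq, deriv_const_mul_comp_const_mul]
  beta_reduce
  rw [scaledModelProfile, modelProfile.deriv_deriv (by omega) hv',
    mul_rpow (rpow_nonneg hz.le _) (modelProfile.pos hv').le, amplitude_rpow (by omega) hz,
    amplitude_mul_rate (by omega) hz, hexp]
  generalize modelProfile n (√lam / z * v) ^ ((2 - (n : ℝ)) / n) = U
  linear_combination (-n * z ^ (1 / ((n : ℝ) - 1)) / z * U) * mul_self_sqrt hlam.le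

theorem deriv_sq (hn : 2 ≤ n) (hlam : 0 < lam) (hz : 0 < z) {v : ℝ}
    (hv : v ∈ Ioo (-scaledHalfWidth n lam z) (scaledHalfWidth n lam z)) :
    deriv (scaledModelProfile n lam z) v ^ 2 =
      lam * (n : ℝ) ^ 2 * z ^ ((2 : ℝ) / ((n : ℝ) - 1)) -
        lam * (n : ℝ) ^ 2 * scaledModelProfile n lam z v ^ ((2 : ℝ) / n) := by
  have hv' := rate_mul_mem_Ioo hlam hz hv
  have hsq : (z ^ (1 / ((n : ℝ) - 1))) ^ 2 = z ^ (2 / ((n : ℝ) - 1)) := by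
    rw [← rpow_natCast, ← rpow_mul hz.le, Nat.cast_ofNat, one_div_mul_eq_div]
  rw [deriv_eq, scaledModelProfile, mul_pow, modelProfile.deriv_sq (by omega) hv',
    mul_rpow (rpow_nonneg hz.le _) (modelProfile.pos hv').le, amplitude_rpow (by omega) hz,
    amplitude_mul_rate (by omega) hz, mul_pow, hsq, sq_sqrt hlam.le]
  ring

theorem tendsto_deriv (hn : 2 ≤ n) (hlam : 0 < lam) (hz : 0 < z) :
    Tendsto (deriv (scaledModelProfile n lam z)) (𝓝[>] (-scaledHalfWidth n lam z))
      (𝓝 (√lam * n * z ^ (1 / ((n : ℝ) - 1)))) := by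
  have hrate :=
    tendsto_const_mul_nhdsGT (div_pos (sqrt_pos.2 hlam) hz) (-scaledHalfWidth n lam z)
  rw [mul_neg, rate_mul_halfWidth hlam hz] at hrate
  have h := modelProfile.tendsto_deriv.comp hrate
  rw [deriv_eq, amplitude_mul_rate (by omega) hz, mul_right_comm]
  exact h.const_mul _

end scaledModelProfile

/-- Existence of the model comparison profile `f_z`: the solution of
`f'' = −λ n f^{(2−n)/n}` with maximum `z^{n/(n−1)}` at `0`, positive exactly on
`(−β, β)` with `β = (z/(2√λ))·√π·Γ(n/2)/Γ((n+1)/2)`, vanishing at `±β`, even,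
with limiting slope `√λ·n·z^{1/(n−1)}` at `−β`. -/
theorem exists_model_profile (n : ℕ) (hn : 3 ≤ n) (lam z : ℝ) (hlam : 0 < lam)
    (hz : 0 < z) (β : ℝ)
    (hβ : β = (z / (2 * Real.sqrt lam)) * Real.sqrt π * Real.Gamma ((n : ℝ) / 2) /
      Real.Gamma (((n : ℝ) + 1) / 2)) :
    ∃ f : ℝ → ℝ,
      ContinuousOn f (Icc (-β) β) ∧
      ContDiffOn ℝ 2 f (Ioo (-β) β) ∧
      (∀ v ∈ Ioo (-β) β, 0 < f v) ∧
      f (-β) = 0 ∧ f β = 0 ∧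
      f 0 = z ^ ((n : ℝ) / ((n : ℝ) - 1)) ∧ deriv f 0 = 0 ∧
      (∀ v ∈ Ioo (-β) β,
        deriv (deriv f) v = -lam * n * f v ^ ((2 - (n : ℝ)) / n)) ∧
      (∀ v ∈ Ioo (-β) β,
        deriv f v ^ 2 = lam * (n : ℝ) ^ 2 * z ^ ((2 : ℝ) / ((n : ℝ) - 1)) -
          lam * (n : ℝ) ^ 2 * f v ^ ((2 : ℝ) / n)) ∧
      (∀ v ∈ Icc (-β) β, f (-v) = f v) ∧
      Tendsto (deriv f) (nhdsWithin (-β) (Ioi (-β)))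
        (nhds (Real.sqrt lam * n * z ^ ((1 : ℝ) / ((n : ℝ) - 1)))) := by
  have hn₂ : 2 ≤ n := by omega
  have hβ' : β = scaledHalfWidth n lam z := by
    have := sqrt_pos.2 hlam
    rw [hβ, scaledHalfWidth, modelHalfWidth_eq (by omega)]
    field_simp
  subst hβ'
  refine ⟨scaledModelProfile n lam z, scaledModelProfile.continuous.continuousOn,
    scaledModelProfile.contDiffOn hlam hz, fun v hv => scaledModelProfile.pos hlam hz hv, ?_,
    scaledModelProfile.halfWidth (by omega) hlam hz, scaledModelProfile.zero,
    scaledModelProfile.deriv_zero, fun v hv => scaledModelProfile.deriv_deriv hn₂ hlam hz hv,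
    fun v hv => scaledModelProfile.deriv_sq hn₂ hlam hz hv, fun v _ => scaledModelProfile.neg v,
    scaledModelProfile.tendsto_deriv hn₂ hlam hz⟩
  rw [scaledModelProfile.neg, scaledModelProfile.halfWidth (by omega) hlam hz]
end
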